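/- Let v ∈ H with v ≠ 0, let T_v be the associated boost on ℋ = ℝ × H, and set α = log(c_v + ‖v‖) where c_v = √(1+‖v‖²). Then: (a) T_v(0,w) = (0,w) for every w ∈ H orthogonal to v; (b) T_v(1, v/‖v‖) = e^{α}·(1, v/‖v‖); (c) T_v(1, −v/‖v‖) = e^{−α}·(1, −v/‖v‖); moreover e^{α} = c_v + ‖v‖ and e^{−α} = c_v − ‖v‖. -/

import Mathlib

open scoped RealInnerProductSpace

noncomputable section

variable {H : Type*} [NormedAddCommGroup H] [InnerProductSpace ℝ H]

/-- The rank-one operator `a ⊗ b : x ↦ ⟪b,x⟫ • a`. -/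
def rankOne (a b : H) : H →L[ℝ] H := (innerSL ℝ b).smulRight a

/-- The boost `T_v` associated with a vector `v`, with the convention `T_0 = id`. -/
def boost (v : H) : (ℝ × H) →L[ℝ] (ℝ × H) :=
  letI : Decidable (v = 0) := Classical.dec _
  if v = 0 then ContinuousLinearMap.id ℝ (ℝ × H)
  else
    ((Real.sqrt (1 + ‖v‖ ^ 2) • ContinuousLinearMap.fst ℝ ℝ H +
        (innerSL ℝ v).comp (ContinuousLinearMap.snd ℝ ℝ H)).prod
      ((ContinuousLinearMap.fst ℝ ℝ H).smulRight v +
        (ContinuousLinearMap.id ℝ H +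
            ((Real.sqrt (1 + ‖v‖ ^ 2) - 1) / ‖v‖ ^ 2) • rankOne v v).comp
          (ContinuousLinearMap.snd ℝ ℝ H)))

/-! `T_v` fixes `v^⊥` pointwise and acts on the plane `ℝ × ℝv` as the hyperbolic rotation
`[[c, ‖v‖], [‖v‖, c]]` (in the basis `(1,0), (0, v/‖v‖)`) with `c = cosh α`, `‖v‖ = sinh α`,
`α = arsinh ‖v‖`; its eigenvectors are the light-like vectors `(1, ±v/‖v‖)`. -/

theorem boost_apply {v : H} (hv : v ≠ 0) (s : ℝ) (x : H) :
    boost v (s, x) = (√(1 + ‖v‖ ^ 2) * s + ⟪v, x⟫,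
      s • v + x + ((√(1 + ‖v‖ ^ 2) - 1) / ‖v‖ ^ 2 * ⟪v, x⟫) • v) := by
  simp [boost, hv, rankOne, smul_smul, add_assoc]

theorem boost_apply_zero_of_inner_eq_zero {v w : H} (hw : ⟪v, w⟫ = 0) :
    boost v (0, w) = (0, w) := by
  by_cases hv : v = 0
  · simp [boost, hv]
  · simp [boost_apply hv, hw]

theorem boost_apply_smul_self {v : H} (hv : v ≠ 0) (s r : ℝ) :
    boost v (s, r • v) = (√(1 + ‖v‖ ^ 2) * s + r * ‖v‖ ^ 2,
      (s + √(1 + ‖v‖ ^ 2) * r) • v) := by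
  have hn : ‖v‖ ≠ 0 := norm_ne_zero_iff.mpr hv
  rw [boost_apply hv, real_inner_smul_right, real_inner_self_eq_norm_sq]
  refine Prod.ext rfl ?_
  match_scalars
  field_simp
  ring

theorem boost_apply_one_smul_self {v : H} (hv : v ≠ 0) {r : ℝ} (hr : (r * ‖v‖) ^ 2 = 1) :
    boost v (1, r • v) = (√(1 + ‖v‖ ^ 2) + r * ‖v‖ ^ 2) • ((1 : ℝ), r • v) := by
  rw [boost_apply_smul_self hv]
  refine Prod.ext (by simp) ?_
  simp only [Prod.smul_snd, smul_smul]
  congr 1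
  linear_combination -hr

/-- With `α = log (c_v + ‖v‖)`, the boost `T_v` fixes the vectors `(0,w)` with `w ⊥ v` and
has `(1, ±v/‖v‖)` as eigenvectors with eigenvalues `e^{±α} = c_v ± ‖v‖`. -/
theorem boost_eigenvalues (v : H) (hv : v ≠ 0) (α : ℝ)
    (hα : α = Real.log (Real.sqrt (1 + ‖v‖ ^ 2) + ‖v‖)) :
    (∀ w : H, ⟪v, w⟫ = 0 → boost v (0, w) = (0, w)) ∧
      boost v ((1 : ℝ), ‖v‖⁻¹ • v) = Real.exp α • ((1 : ℝ), ‖v‖⁻¹ • v) ∧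
      boost v ((1 : ℝ), -(‖v‖⁻¹ • v)) = Real.exp (-α) • ((1 : ℝ), -(‖v‖⁻¹ • v)) ∧
      Real.exp α = Real.sqrt (1 + ‖v‖ ^ 2) + ‖v‖ ∧
      Real.exp (-α) = Real.sqrt (1 + ‖v‖ ^ 2) - ‖v‖ := by
  have hn : ‖v‖ ≠ 0 := norm_ne_zero_iff.mpr hv
  have hα' : α = Real.arsinh ‖v‖ := by rw [hα, Real.arsinh, add_comm]
  have hexp : Real.exp α = √(1 + ‖v‖ ^ 2) + ‖v‖ := by
    rw [hα', Real.exp_arsinh, add_comm]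
  have hexp_neg : Real.exp (-α) = √(1 + ‖v‖ ^ 2) - ‖v‖ := by
    rw [hα', ← Real.arsinh_neg, Real.exp_arsinh, neg_sq, neg_add_eq_sub]
  refine ⟨fun w => boost_apply_zero_of_inner_eq_zero, ?_, ?_, hexp, hexp_neg⟩
  · rw [boost_apply_one_smul_self hv (by field_simp), hexp]
    congr 1
    field_simp
  · rw [← neg_smul, boost_apply_one_smul_self hv (by field_simp), hexp_neg]
    congr 1
    field_simp
    ring
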